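/- arXiv:2210.04611 — 2 statements merged into one kernel-verified Lean document; each statement's English description precedes it below -/
import Mathlib

section
/- Suppose Q is a medial quandle and S ⊆ Q is a generating set of Q (the smallest subset of Q containing S and closed under ▷ and ▷⁻¹ is Q itself). Then the Λ-module Dis(Q) is generated by the elements β_s β_{s′}⁻¹ with s, s′ ∈ S. -/
open LaurentPolynomial

set_option synthInstance.maxHeartbeats 1000000
set_option maxHeartbeats 1000000

noncomputable section

/-- The ring `Λ = ℤ[t,t⁻¹]` of Laurent polynomials with integer coefficients. -/
abbrev Λ : Type := LaurentPolynomial ℤ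

/-- The variable `t ∈ Λ`. -/
abbrev tL : Λ := T 1

/-- A medial quandle structure on a type `Q`: an idempotent binary operation whose right
translations are bijections, satisfying the medial law. -/
structure MedialQuandleStr (Q : Type*) where
  op : Q → Q → Q
  idem : ∀ x, op x x = x
  bij : ∀ y, Function.Bijective fun x => op x y
  medial : ∀ w x y z, op (op w x) (op y z) = op (op w y) (op x z)

/-- A quandle structure on a type `T`. -/
structure QuandleStr (T : Type*) where
  op : T → T → T
  idem : ∀ x, op x x = x
  bij : ∀ y, Function.Bijective fun x => op x y
  distrib : ∀ x y z, op (op x y) z = op (op x z) (op y z)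

namespace MedialQuandleStr

variable {Q : Type*} (s : MedialQuandleStr Q)

/-- The translation `β_y : x ↦ x ▷ y`, as a permutation of `Q`. -/
def β (y : Q) : Equiv.Perm Q := Equiv.ofBijective _ (s.bij y)

/-- `β(Q)`: the subgroup of permutations generated by the translations. -/
def transGroup : Subgroup (Equiv.Perm Q) := Subgroup.closure (Set.range s.β)

/-- The displacement group `Dis(Q)`, generated by the elementary displacements
`β_y β_z⁻¹`. -/
def Dis : Subgroup (Equiv.Perm Q) :=
  Subgroup.closure {d : Equiv.Perm Q | ∃ y z, d = s.β y * (s.β z)⁻¹}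

/-- The orbit of `q`: the smallest subset of `Q` containing `q` and closed under the
action of `β(Q)`. -/
def orbit (q : Q) : Set Q := {x | ∃ g ∈ s.transGroup, g q = x}

end MedialQuandleStr

section Construction

variable {M : Type*} [AddCommGroup M] [Module Λ M] {I : Type*}

/-- The carrier of the quandle `Q(N,(m_i),(X_i))`: the disjoint union of the quotients
`Q_i = N/X_i`. -/
def QCar (N : Submodule Λ M) (X : I → Submodule Λ ↥N) : Type _ :=
  Σ i : I, ↥N ⧸ X i

/-- The condition `(1-t)·X_i = 0` for all `i`. -/
def annCond (N : Submodule Λ M) (X : I → Submodule Λ ↥N) : Prop :=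
  ∀ i, ∀ x ∈ X i, (1 - tL) • (x : ↥N) = 0

/-- Multiplication by `1-t`, descended from `N/X_j` to `N` (well defined since
`(1-t)·X_j = 0`). -/
def oneSubT (N : Submodule Λ M) {X : I → Submodule Λ ↥N} (h : annCond N X) (j : I) :
    (↥N ⧸ X j) →ₗ[Λ] ↥N :=
  Submodule.liftQ (X j) ((1 - tL) • (LinearMap.id : ↥N →ₗ[Λ] ↥N))
    (fun x hx => by simpa using h j x hx)

/-- The operation of `Q(N,(m_i),(X_i))`: for `x ∈ Q_i` and `y ∈ Q_j`,
`x ▷ y = m_j - m_i + t·x + (1-t)·y + X_i ∈ Q_i`. -/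
def qop (N : Submodule Λ M) (m : I → M) {X : I → Submodule Λ ↥N}
    (hm : ∀ i j, m i - m j ∈ N) (h : annCond N X) :
    QCar N X → QCar N X → QCar N X :=
  fun x y =>
    ⟨x.1, Submodule.Quotient.mk (⟨m y.1 - m x.1, hm y.1 x.1⟩ : ↥N)
        + tL • x.2 + Submodule.Quotient.mk (oneSubT N h y.1 y.2)⟩

end Construction

/-!
Since `Dis(Q)` is abelian and `β_q β_{q₀}⁻¹ ∈ Dis(Q)`, conjugation by `β_q` agrees on `Dis(Q)`
with conjugation by `β_{q₀}`; so `H` is normalized by every translation. Fix `a ∈ S`. As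
`β_{x ▷ y} = β_y β_x β_y⁻¹`, the set of `q` with `β_q ∈ H β_a` is closed under `▷` and `▷⁻¹`
(for `β_x, β_y` in one coset of `H`, the commutator `[β_y, β_x]` lies in `H`), and it contains
`S`; hence it is all of `Q`, and `β_y β_z⁻¹ = (β_y β_a⁻¹)(β_z β_a⁻¹)⁻¹ ∈ H`.
-/

theorem Subgroup.mem_normalizer_of_conj_mem {G : Type*} [Group G] {H : Subgroup G} {g : G}
    (hconj : ∀ h ∈ H, g * h * g⁻¹ ∈ H) (hconj' : ∀ h ∈ H, g⁻¹ * h * g ∈ H) :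
    g ∈ Subgroup.normalizer H :=
  Subgroup.mem_normalizer_iff.mpr fun h =>
    ⟨hconj h, fun hh => by simpa [mul_assoc] using hconj' _ hh⟩

theorem Subgroup.mul_mul_inv_mul_inv_mem {G : Type*} [Group G] {H : Subgroup G} {a b : G}
    (hb : b ∈ Subgroup.normalizer H) (hab : a * b⁻¹ ∈ H) : a * b * a⁻¹ * b⁻¹ ∈ H := by
  have hba : b * (b * a⁻¹) * b⁻¹ ∈ H :=
    (Subgroup.mem_normalizer_iff.mp hb _).mp (by simpa using inv_mem hab)
  simpa [mul_assoc] using mul_mem hab hba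

namespace MedialQuandleStr

variable {Q : Type*} (s : MedialQuandleStr Q)

theorem β_op (x y : Q) : s.β (s.op x y) = s.β y * s.β x * (s.β y)⁻¹ := by
  rw [eq_mul_inv_iff_mul_eq]
  ext w
  simpa [β, s.idem] using (s.medial w x y y).symm

theorem β_symm_op (x y : Q) : s.β ((s.β y)⁻¹ x) = (s.β y)⁻¹ * s.β x * s.β y := by
  have h := s.β_op ((s.β y)⁻¹ x) y
  rw [show s.op ((s.β y)⁻¹ x) y = x from (s.β y).apply_symm_apply x] at h
  rw [h]
  group

/-- The medial law, read as an identity of translations and simplified with `β_op`. -/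
theorem β_mul_inv_mul_comm (x y z : Q) :
    s.β y * (s.β z)⁻¹ * s.β x = s.β x * (s.β z)⁻¹ * s.β y := by
  have h : s.β (s.op y z) * s.β x = s.β (s.op x z) * s.β y := by
    ext w
    exact s.medial w x y z
  rw [s.β_op, s.β_op] at h
  simpa only [mul_assoc, mul_right_inj] using h

theorem β_mul_inv_commute (a b c d : Q) :
    Commute (s.β a * (s.β b)⁻¹) (s.β c * (s.β d)⁻¹) := by
  have h := s.β_mul_inv_mul_comm
  have h' : ∀ x y z, (s.β x)⁻¹ * s.β z * (s.β y)⁻¹ = (s.β y)⁻¹ * s.β z * (s.β x)⁻¹ := by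
    intro x y z
    simpa [mul_assoc] using congrArg Inv.inv (h x y z)
  calc (s.β a * (s.β b)⁻¹) * (s.β c * (s.β d)⁻¹)
      = (s.β a * (s.β b)⁻¹ * s.β c) * (s.β d)⁻¹ := by group
    _ = s.β c * ((s.β b)⁻¹ * s.β a * (s.β d)⁻¹) := by rw [h c a b]; group
    _ = (s.β c * (s.β d)⁻¹) * (s.β a * (s.β b)⁻¹) := by rw [h' b d a]; group

instance : IsMulCommutative s.Dis :=
  Subgroup.isMulCommutative_closure <| by
    rintro _ ⟨a, b, rfl⟩ _ ⟨c, d, rfl⟩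
    exact s.β_mul_inv_commute a b c d

theorem β_mul_inv_mem_Dis (y z : Q) : s.β y * (s.β z)⁻¹ ∈ s.Dis :=
  Subgroup.subset_closure ⟨y, z, rfl⟩

theorem Dis_le_normalizer {H : Subgroup (Equiv.Perm Q)} (hH : H ≤ s.Dis) :
    s.Dis ≤ Subgroup.normalizer H :=
  (Subgroup.le_centralizer s.Dis).trans <|
    (Subgroup.centralizer_le hH).trans (Subgroup.centralizer_le_normalizer _)

theorem β_mem_normalizer {H : Subgroup (Equiv.Perm Q)} (hH : H ≤ s.Dis) {q₀ : Q}
    (hq₀ : s.β q₀ ∈ Subgroup.normalizer H) (q : Q) : s.β q ∈ Subgroup.normalizer H := by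
  simpa using mul_mem (s.Dis_le_normalizer hH (s.β_mul_inv_mem_Dis q q₀)) hq₀

variable {s}

theorem β_op_mul_inv_mem {H : Subgroup (Equiv.Perm Q)} (hβ : ∀ q, s.β q ∈ Subgroup.normalizer H)
    {x y : Q} (hyx : s.β y * (s.β x)⁻¹ ∈ H) : s.β (s.op x y) * (s.β x)⁻¹ ∈ H := by
  rw [s.β_op]
  exact Subgroup.mul_mul_inv_mul_inv_mem (hβ x) hyx

theorem β_symm_mul_inv_mem {H : Subgroup (Equiv.Perm Q)} (hβ : ∀ q, s.β q ∈ Subgroup.normalizer H)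
    {x y : Q} (hxy : s.β x * (s.β y)⁻¹ ∈ H) : s.β ((s.β y)⁻¹ x) * (s.β x)⁻¹ ∈ H := by
  have hcomm := Subgroup.mul_mul_inv_mul_inv_mem (hβ y) hxy
  have := (Subgroup.mem_normalizer_iff''.mp (hβ y) _).mp hcomm
  rw [s.β_symm_op]
  convert this using 1
  group

end MedialQuandleStr

/-- If `S` generates the medial quandle `Q` (the smallest subset of `Q`
containing `S` and closed under `▷` and `▷⁻¹` is `Q` itself), then the `Λ`-module
`Dis(Q)` is generated by the elements `β_s β_{s'}⁻¹` with `s, s' ∈ S`: every subgroup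
`H` of `Dis(Q)` containing these elements and closed under scalar multiplication by
`t^{±1}` (i.e. under conjugation by a translation, in both directions) is all of
`Dis(Q)`. -/
theorem stmt9 {Q : Type*} (s : MedialQuandleStr Q) (S : Set Q) (q₀ : Q)
    (hgen : ∀ C : Set Q, S ⊆ C →
      (∀ x ∈ C, ∀ y ∈ C, s.op x y ∈ C ∧ (s.β y)⁻¹ x ∈ C) → ∀ q : Q, q ∈ C) :
    ∀ H : Subgroup (Equiv.Perm Q), H ≤ s.Dis →
      (∀ a ∈ S, ∀ b ∈ S, s.β a * (s.β b)⁻¹ ∈ H) →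
      (∀ d ∈ H, s.β q₀ * d * (s.β q₀)⁻¹ ∈ H) →
      (∀ d ∈ H, (s.β q₀)⁻¹ * d * s.β q₀ ∈ H) →
      s.Dis ≤ H := by
  intro H hH hS hconj hconj'
  obtain ⟨a, ha⟩ : S.Nonempty :=
    Set.nonempty_iff_ne_empty.mpr fun h => by simpa using hgen ∅ h.le (by simp) q₀
  have hβ := s.β_mem_normalizer hH (Subgroup.mem_normalizer_of_conj_mem hconj hconj')
  have hall : ∀ q, s.β q * (s.β a)⁻¹ ∈ H := by
    refine hgen {q | s.β q * (s.β a)⁻¹ ∈ H} (fun b hb => hS b hb a ha) ?_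
    intro x (hx : _ ∈ H) y (hy : _ ∈ H)
    have hyx : s.β y * (s.β x)⁻¹ ∈ H := by simpa [mul_assoc] using mul_mem hy (inv_mem hx)
    have hxy : s.β x * (s.β y)⁻¹ ∈ H := by simpa using inv_mem hyx
    exact ⟨by simpa [mul_assoc] using mul_mem (MedialQuandleStr.β_op_mul_inv_mem hβ hyx) hx,
      by simpa [mul_assoc] using mul_mem (MedialQuandleStr.β_symm_mul_inv_mem hβ hxy) hx⟩
  refine (Subgroup.closure_le H).mpr ?_
  rintro _ ⟨y, z, rfl⟩
  simpa [mul_assoc] using mul_mem (hall y) (inv_mem (hall z))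
end
end

section
/- Every medial quandle Q with a single orbit is isomorphic to the affine (standard Alexander) quandle on the Λ-module Dis(Q); an isomorphism is induced by the map d ↦ d(q) for any fixed q ∈ Q. -/
open LaurentPolynomial

set_option synthInstance.maxHeartbeats 1000000
set_option maxHeartbeats 1000000

noncomputable section

/-!
Conjugation by a translation sends `β_a β_b⁻¹` to `β_{a▷y} β_{b▷y}⁻¹` (right distributivity), so
`β(Q)` normalizes `Dis(Q)` and `Dis(Q)` is transitive as soon as `β(Q)` is. A transitive abelian
permutation group acts regularly, so `d ↦ d(q)` is a bijection. Writing
`t•a + (1-t)•b = t•(a - b) + b`, its image is `β_y (e(a) e(b)⁻¹) β_y⁻¹ e(b)` for every `y`;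
taking `y = e(b)(q)` this sends `q` to `e(a)(q) ▷ e(b)(q)`.
-/

def affineOp {D : Type*} [AddCommGroup D] [Module Λ D] (a b : D) : D :=
  tL • a + (1 - tL) • b

section AddToMul

variable {D G : Type*} [Group G] {f : D → G}

lemma map_neg_of_map_add [AddGroup D] (hf : ∀ a b, f (a + b) = f a * f b) (a : D) :
    f (-a) = (f a)⁻¹ :=
  map_inv (MonoidHom.mk' (f ∘ Multiplicative.toAdd) fun _ _ => hf _ _) (Multiplicative.ofAdd a)

lemma commute_of_map_add [AddCommGroup D] (hf : ∀ a b, f (a + b) = f a * f b) (a b : D) :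
    Commute (f a) (f b) := by
  rw [Commute, SemiconjBy, ← hf, ← hf, add_comm]

end AddToMul

lemma Equiv.Perm.eq_of_apply_eq_of_commute {α : Type*} {G : Subgroup (Equiv.Perm α)}
    (hcomm : ∀ u ∈ G, ∀ v ∈ G, Commute u v) {q : α} (htrans : ∀ x, ∃ d ∈ G, d q = x)
    {u v : Equiv.Perm α} (hu : u ∈ G) (hv : v ∈ G) (huv : u q = v q) : u = v := by
  ext x
  obtain ⟨d, hd, rfl⟩ := htrans x
  calc u (d q) = d (u q) := congrArg (· q) (hcomm u hu d hd).eq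
    _ = d (v q) := by rw [huv]
    _ = v (d q) := congrArg (· q) (hcomm v hv d hd).eq.symm

namespace MedialQuandleStr

variable {Q : Type*} (s : MedialQuandleStr Q)

lemma β_apply (y x : Q) : s.β y x = s.op x y := rfl

lemma op_right_distrib (x a y : Q) : s.op (s.op x a) y = s.op (s.op x y) (s.op a y) := by
  simpa only [s.idem] using s.medial x a y y

lemma β_inv_apply_self (x : Q) : (s.β x)⁻¹ x = x :=
  (Equiv.symm_apply_eq _).mpr (s.idem x).symm

lemma β_mul_β_mul_β_inv (y a : Q) : s.β y * s.β a * (s.β y)⁻¹ = s.β (s.op a y) := by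
  rw [mul_inv_eq_iff_eq_mul]
  ext x
  exact s.op_right_distrib x a y

lemma β_inv_mul_β_mul_β (y a : Q) : (s.β y)⁻¹ * s.β a * s.β y = s.β ((s.β y)⁻¹ a) := by
  have h := s.β_mul_β_mul_β_inv y ((s.β y)⁻¹ a)
  rw [show s.op ((s.β y)⁻¹ a) y = a from (s.β y).apply_symm_apply a] at h
  rw [← h]
  group

lemma β_mul_β_inv_mem_Dis (a b : Q) : s.β a * (s.β b)⁻¹ ∈ s.Dis :=
  Subgroup.subset_closure ⟨a, b, rfl⟩

lemma conj_mem_Dis {g : Equiv.Perm Q} (hg : ∀ a, ∃ b, g * s.β a * g⁻¹ = s.β b)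
    {d : Equiv.Perm Q} (hd : d ∈ s.Dis) : g * d * g⁻¹ ∈ s.Dis := by
  suffices s.Dis ≤ s.Dis.comap (MulAut.conj g).toMonoidHom from this hd
  refine (Subgroup.closure_le _).2 ?_
  rintro _ ⟨a, c, rfl⟩
  obtain ⟨a', ha'⟩ := hg a
  obtain ⟨c', hc'⟩ := hg c
  have hconj : g * (s.β a * (s.β c)⁻¹) * g⁻¹ = s.β a' * (s.β c')⁻¹ := by
    rw [← ha', ← hc']; group
  simpa only [SetLike.mem_coe, Subgroup.mem_comap, MulEquiv.coe_toMonoidHom,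
    MulAut.conj_apply, hconj] using s.β_mul_β_inv_mem_Dis a' c'

lemma β_mem_normalizer_Dis (y : Q) :
    s.β y ∈ Subgroup.normalizer (s.Dis : Set (Equiv.Perm Q)) := by
  refine Subgroup.mem_normalizer_iff.2 fun d =>
    ⟨s.conj_mem_Dis fun a => ⟨_, s.β_mul_β_mul_β_inv y a⟩, fun hd => ?_⟩
  have hinv := s.conj_mem_Dis (g := (s.β y)⁻¹) (fun a => ⟨_, by
    simpa only [inv_inv] using s.β_inv_mul_β_mul_β y a⟩) hd
  simpa only [inv_inv, ← mul_assoc, inv_mul_cancel, one_mul, inv_mul_cancel_right] using hinv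

lemma transGroup_le_normalizer_Dis :
    s.transGroup ≤ Subgroup.normalizer (s.Dis : Set (Equiv.Perm Q)) :=
  (Subgroup.closure_le _).2 <| Set.range_subset_iff.2 s.β_mem_normalizer_Dis

lemma exists_mem_Dis_apply_eq (q : Q) {g : Equiv.Perm Q} (hg : g ∈ s.transGroup) :
    ∃ d ∈ s.Dis, d q = g q := by
  induction hg using Subgroup.closure_induction with
  | mem _ hg =>
    obtain ⟨y, rfl⟩ := hg
    refine ⟨s.β y * (s.β q)⁻¹, s.β_mul_β_inv_mem_Dis y q, ?_⟩
    rw [Equiv.Perm.mul_apply, s.β_inv_apply_self]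
  | one => exact ⟨1, one_mem _, rfl⟩
  | mul g h hg _ ihg ihh =>
    obtain ⟨d, hd, hdq⟩ := ihg
    obtain ⟨d', hd', hd'q⟩ := ihh
    refine ⟨g * d' * g⁻¹ * d, mul_mem ?_ hd, ?_⟩
    · exact (Subgroup.mem_normalizer_iff.1 (s.transGroup_le_normalizer_Dis hg) d').1 hd'
    · simp [hdq, hd'q]
  | inv g hg ihg =>
    obtain ⟨d, hd, hdq⟩ := ihg
    refine ⟨g⁻¹ * d⁻¹ * g, ?_, ?_⟩
    · exact (Subgroup.mem_normalizer_iff''.1 (s.transGroup_le_normalizer_Dis hg) _).1 (inv_mem hd)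
    · simp [← hdq]

lemma apply_affineOp {D : Type*} [AddCommGroup D] [Module Λ D] {f : D → Equiv.Perm Q}
    (hadd : ∀ a b, f (a + b) = f a * f b)
    (hsmul : ∀ a y, f (tL • a) = s.β y * f a * (s.β y)⁻¹) (q : Q) (a b : D) :
    f (affineOp a b) q = s.op (f a q) (f b q) := by
  have hsplit : affineOp a b = tL • (a + -b) + b := by
    rw [affineOp, smul_add, smul_neg, sub_smul, one_smul]; abel
  rw [hsplit, hadd, hsmul _ (f b q), hadd, map_neg_of_map_add hadd]
  simp only [Equiv.Perm.mul_apply, s.β_inv_apply_self, Equiv.Perm.coe_inv,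
    Equiv.symm_apply_apply, s.β_apply]

end MedialQuandleStr

/-- `Dis(Q)` with its `Λ`-module structure is presented as an abstract `Λ`-module `D` with a
bijection `e` to `Dis(Q)` translating addition into composition and multiplication by `t` into
conjugation by a translation. -/
theorem stmt19 {Q : Type*} (s : MedialQuandleStr Q)
    (hsingle : ∀ x y : Q, y ∈ s.orbit x)
    {D : Type*} [AddCommGroup D] [Module Λ D]
    (e : D ≃ ↥s.Dis)
    (hadd : ∀ a b : D, (e (a + b)).val = (e a).val * (e b).val)
    (hsmul : ∀ (a : D) (q' : Q), (e (tL • a)).val = s.β q' * (e a).val * (s.β q')⁻¹)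
    (q : Q) :
    Function.Bijective (fun a : D => (e a).val q) ∧
    ∀ a b : D, (e (tL • a + (1 - tL) • b)).val q = s.op ((e a).val q) ((e b).val q) := by
  have hcomm : ∀ u ∈ s.Dis, ∀ v ∈ s.Dis, Commute u v := fun u hu v hv => by
    simpa using
      commute_of_map_add (f := fun a => (e a).val) hadd (e.symm ⟨u, hu⟩) (e.symm ⟨v, hv⟩)
  have htrans : ∀ x, ∃ d ∈ s.Dis, d q = x := fun x => by
    obtain ⟨g, hg, rfl⟩ := hsingle q x
    exact s.exists_mem_Dis_apply_eq q hg
  refine ⟨⟨fun a b hab => e.injective (Subtype.ext ?_), fun x => ?_⟩,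
    s.apply_affineOp (f := fun a => (e a).val) hadd hsmul q⟩
  · exact Equiv.Perm.eq_of_apply_eq_of_commute hcomm htrans (e a).2 (e b).2 hab
  · obtain ⟨d, hd, rfl⟩ := htrans x
    exact ⟨e.symm ⟨d, hd⟩, by simp⟩
end
end
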